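/- If Z has density f(z;α,β,λ) = [(1-αz-βz³)²+1]φ(z)Φ(λz)/C(α,β,λ), then for every natural number k, C(α,β,λ)·E(Z^k) = m_k - α m_{k+1} + (α²/2) m_{k+2} - β m_{k+3} + αβ m_{k+4} + (β²/2) m_{k+6}, where m_j = ∫ z^j·2φ(z)Φ(λz)dz is the j-th moment of SN(λ). -/
import Mathlib


open Real MeasureTheory Filter

/-- standard normal pdf -/
noncomputable def phi (z : ℝ) : ℝ := (Real.sqrt (2 * Real.pi))⁻¹ * Real.exp (-z ^ 2 / 2)

/-- standard normal cdf -/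
noncomputable def Phi (z : ℝ) : ℝ := ∫ t in Set.Iic z, phi t

noncomputable def bconst : ℝ := Real.sqrt (2 / Real.pi)

noncomputable def del (l : ℝ) : ℝ := l / Real.sqrt (1 + l ^ 2)

/-- GABSN normalizing constant -/
noncomputable def C (a β l : ℝ) : ℝ :=
  1 + 3 * a * β - a * bconst * del l - β * bconst * del l * (3 + 2 * l ^ 2) / (1 + l ^ 2)
    + a ^ 2 / 2 + 15 * β ^ 2 / 2

/-- GABSN density -/
noncomputable def f (a β l z : ℝ) : ℝ :=
  (((1 - a * z - β * z ^ 3) ^ 2 + 1) * phi z * Phi (l * z)) / C a β l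

/-- j-th moment of the skew normal SN(l) -/
noncomputable def m (l : ℝ) (j : ℕ) : ℝ := ∫ z : ℝ, z ^ j * (2 * phi z * Phi (l * z))

lemma integrable_pow_gauss (j : ℕ) : Integrable fun x : ℝ => x ^ j * Real.exp (-x ^ 2 / 2) := by
  have h := integrable_rpow_mul_exp_neg_mul_sq (b := 1/2) (by norm_num) (s := (j:ℝ))
    (by linarith [Nat.cast_nonneg (α := ℝ) j])
  have h2 : (fun x : ℝ => x ^ j * Real.exp (-x ^ 2 / 2))
      = fun x : ℝ => x ^ (j:ℝ) * Real.exp (-(1/2) * x ^ 2) := by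
    funext x
    rw [Real.rpow_natCast]
    congr 1
    ring
  rw [h2]; exact h

lemma phi_nonneg (z : ℝ) : 0 ≤ phi z := by
  unfold phi; positivity

lemma continuous_phi : Continuous phi := by
  unfold phi; fun_prop

lemma integrable_phi : Integrable phi := by
  have h := (integrable_pow_gauss 0).const_mul (Real.sqrt (2 * Real.pi))⁻¹
  have h2 : phi = fun x : ℝ => (Real.sqrt (2 * Real.pi))⁻¹ * (x ^ 0 * Real.exp (-x ^ 2 / 2)) := by
    funext x; simp [phi]
  rw [h2]; exact h

lemma monotone_Phi : Monotone Phi := by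
  intro x y hxy
  exact setIntegral_mono_set integrable_phi.integrableOn
    (ae_of_all _ phi_nonneg) ((Set.Iic_subset_Iic.mpr hxy).eventuallyLE)

lemma measurable_Phi : Measurable Phi := monotone_Phi.measurable

lemma Phi_nonneg (z : ℝ) : 0 ≤ Phi z :=
  setIntegral_nonneg measurableSet_Iic fun t _ => phi_nonneg t

lemma Phi_le (z : ℝ) : Phi z ≤ ∫ t, phi t :=
  setIntegral_le_integral integrable_phi (ae_of_all _ phi_nonneg)

noncomputable def gfun (l : ℝ) (j : ℕ) (z : ℝ) : ℝ := z ^ j * (phi z * Phi (l * z))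

lemma integrable_gfun (l : ℝ) (j : ℕ) : Integrable (gfun l j) := by
  set B : ℝ := ∫ t, phi t with hB
  have hB0 : 0 ≤ B := integral_nonneg phi_nonneg
  have hmeas : AEStronglyMeasurable (gfun l j) volume := by
    refine Measurable.aestronglyMeasurable ?_
    exact (measurable_id.pow_const j).mul
      (continuous_phi.measurable.mul (measurable_Phi.comp (measurable_id.const_mul l)))
  refine ((integrable_pow_gauss j).abs.const_mul B).mono' hmeas (ae_of_all _ fun z => ?_)
  have h1 : |Phi (l * z)| = Phi (l * z) := abs_of_nonneg (Phi_nonneg _)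
  have h2 : Phi (l * z) ≤ B := Phi_le _
  rw [Real.norm_eq_abs]
  unfold gfun
  rw [abs_mul, abs_mul, abs_of_nonneg (phi_nonneg z), h1, abs_mul,
    abs_of_nonneg (Real.exp_nonneg _)]
  unfold phi
  have h3 : (0:ℝ) ≤ (Real.sqrt (2 * Real.pi))⁻¹ := by positivity
  calc |z ^ j| * ((Real.sqrt (2 * Real.pi))⁻¹ * Real.exp (-z ^ 2 / 2) * Phi (l * z))
      ≤ |z ^ j| * ((Real.sqrt (2 * Real.pi))⁻¹ * Real.exp (-z ^ 2 / 2) * B) := by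
        gcongr
    _ ≤ B * (|z ^ j| * Real.exp (-z ^ 2 / 2)) := by
        have h4 : (Real.sqrt (2 * Real.pi))⁻¹ ≤ 1 := by
          rw [inv_le_one_iff₀]
          right
          rw [show (1:ℝ) = Real.sqrt 1 from (Real.sqrt_one).symm]
          exact Real.sqrt_le_sqrt (by nlinarith [Real.pi_gt_three])
        nlinarith [mul_nonneg (mul_nonneg hB0 (abs_nonneg (z ^ j)))
            (Real.exp_nonneg (-z ^ 2 / 2)), sub_nonneg.mpr h4]

lemma m_eq (l : ℝ) (j : ℕ) : m l j = 2 * ∫ z, gfun l j z := by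
  unfold m
  rw [← MeasureTheory.integral_const_mul]
  congr 1
  funext z
  unfold gfun
  ring

lemma C_pos (a β l : ℝ) : 0 < C a β l := by
  have hπ3 := Real.pi_gt_three
  have h1 : (0:ℝ) < 1 + l ^ 2 := by positivity
  set s : ℝ := l ^ 2 / (1 + l ^ 2) with hs
  have hs0 : 0 ≤ s := by positivity
  have hs1 : s ≤ 1 := by rw [hs, div_le_one h1]; linarith
  set d : ℝ := bconst * del l with hd
  have hd2 : d ^ 2 = 2 * s / Real.pi := by
    rw [hd, hs, mul_pow, bconst, del, div_pow, Real.sq_sqrt (by positivity : (0:ℝ) ≤ 2 / Real.pi),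
      Real.sq_sqrt h1.le]
    ring
  have hC : C a β l = 1 + 3 * a * β - a * d - β * d * (3 - s) + a ^ 2 / 2 + 15 * β ^ 2 / 2 := by
    rw [C, hd, hs]
    have : (3:ℝ) - l ^ 2 / (1 + l ^ 2) = (3 + 2 * l ^ 2) / (1 + l ^ 2) := by
      field_simp; ring
    rw [this]
    ring
  have hπd : Real.pi * d ^ 2 = 2 * s := by
    rw [hd2]; field_simp
  have hss : s * s ≤ 1 := mul_le_one₀ hs1 hs0 hs1
  rw [hC]
  nlinarith [sq_nonneg (a + 3 * β - d), sq_nonneg (β + s * d / 6), sq_nonneg d,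
    sq_nonneg (s * d), hss, hπd, hπ3, hs0, hs1, mul_nonneg hs0 (sq_nonneg d)]

theorem stmt_12 (a β l : ℝ) (k : ℕ) :
    C a β l * ∫ z : ℝ, z ^ k * f a β l z
      = m l k - a * m l (k + 1) + a ^ 2 / 2 * m l (k + 2) - β * m l (k + 3)
        + a * β * m l (k + 4) + β ^ 2 / 2 * m l (k + 6) := by
  have hC := (C_pos a β l).ne'
  have hfg : (fun z : ℝ => z ^ k * f a β l z)
      = fun z : ℝ => (C a β l)⁻¹ *
        (2 * gfun l k z + (-2 * a) * gfun l (k + 1) z + a ^ 2 * gfun l (k + 2) z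
          + (-2 * β) * gfun l (k + 3) z + (2 * a * β) * gfun l (k + 4) z
          + β ^ 2 * gfun l (k + 6) z) := by
    funext z
    unfold f gfun
    rw [div_eq_mul_inv]
    ring
  rw [hfg, MeasureTheory.integral_const_mul]
  have A1 := (integrable_gfun l k).const_mul 2
  have A2 := (integrable_gfun l (k + 1)).const_mul (-2 * a)
  have A3 := (integrable_gfun l (k + 2)).const_mul (a ^ 2)
  have A4 := (integrable_gfun l (k + 3)).const_mul (-2 * β)
  have A5 := (integrable_gfun l (k + 4)).const_mul (2 * a * β)
  have A6 := (integrable_gfun l (k + 6)).const_mul (β ^ 2)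
  have E6 := integral_add ((((A1.add A2).add A3).add A4).add A5) A6
  have E5 := integral_add (((A1.add A2).add A3).add A4) A5
  have E4 := integral_add ((A1.add A2).add A3) A4
  have E3 := integral_add (A1.add A2) A3
  have E2 := integral_add A1 A2
  simp only [Pi.add_apply] at E6 E5 E4 E3 E2
  rw [E6, E5, E4, E3, E2,
    MeasureTheory.integral_const_mul, MeasureTheory.integral_const_mul,
    MeasureTheory.integral_const_mul, MeasureTheory.integral_const_mul,
    MeasureTheory.integral_const_mul, MeasureTheory.integral_const_mul,
    m_eq, m_eq, m_eq, m_eq, m_eq, m_eq,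
    ← mul_assoc, mul_inv_cancel₀ hC, one_mul]
  ring
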